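/- arXiv:2001.04781 — 2 statements merged into one kernel-verified Lean document; each statement's English description precedes it below -/
import Mathlib

section
/- Let ζ ∈ ℂ with Re(ζ) < 0, h > 0 and ℓ a nonnegative half-integer. Then as s → +∞, ∫₀ʰ r^ℓ e^{s√r·ζ} dr = (2·(−1)^{2ℓ}·(2ℓ+1)!)/(s^{2ℓ+2}·ζ^{2ℓ+2}) + O(s^{−1/2}·e^{√(sh)·Re(ζ)}); in particular s^{2ℓ+2}·∫₀ʰ r^ℓ e^{s√r·ζ} dr → 2·(−1)^{2ℓ}·(2ℓ+1)!/ζ^{2ℓ+2}. -/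
open Complex Real Filter Asymptotics Topology

/-!
Substituting `u = √r` turns the integral into `2 ∫₀^√h u^(m+1) e^(zu) du` with `z = sζ`.
Integrating by parts `m + 1` times gives the primitive `powExpPrimitive z (m + 1)` of
`u^(m+1) e^(zu)`: it is `e^(zu)` times a polynomial in `u` with coefficients `O(z⁻¹)`.
Its value at `u = 0` is `(-1)^(m+1) (m+1)! / z^(m+2)`, the main term, while at `u = √h` it is
`O(s⁻¹ e^(s √h Re ζ))`, which is negligible against both `s^(-1/2) e^(√(sh) Re ζ)` and
`s^(-(m+2))` because `Re ζ < 0`.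
-/

noncomputable def powExpPrimitive (z : ℂ) : ℕ → ℝ → ℂ
  | 0, u => exp (z * u) / z
  | n + 1, u => ((u : ℂ) ^ (n + 1) * exp (z * u) - (n + 1) * powExpPrimitive z n u) / z

namespace powExpPrimitive

variable {z : ℂ}

lemma apply_zero (hz : z ≠ 0) (n : ℕ) :
    powExpPrimitive z n 0 = (-1) ^ n * n.factorial / z ^ (n + 1) := by
  induction n with
  | zero => simp [powExpPrimitive]
  | succ n ih =>
    rw [powExpPrimitive, ih, Nat.factorial_succ]
    push_cast
    field_simp
    ring

lemma hasDerivAt (hz : z ≠ 0) (n : ℕ) (u : ℝ) :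
    HasDerivAt (powExpPrimitive z n) ((u : ℂ) ^ n * exp (z * u)) u := by
  have hexp : HasDerivAt (fun u : ℝ => exp (z * u)) (exp (z * u) * z) u := by
    simpa using ((hasDerivAt_id u).ofReal_comp.const_mul z).cexp
  induction n with
  | zero =>
    refine (hexp.div_const z).congr_deriv ?_
    field_simp
  | succ n ih =>
    have hpow : HasDerivAt (fun u : ℝ => (u : ℂ) ^ (n + 1)) ((n + 1 : ℕ) * (u : ℂ) ^ n) u := by
      simpa using (hasDerivAt_pow (n + 1) (u : ℂ)).comp_ofReal
    refine (((hpow.mul hexp).sub (ih.const_mul (n + 1 : ℂ))).div_const z).congr_deriv ?_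
    field_simp
    push_cast
    ring

lemma isBigO_atTop (ζ : ℂ) (n : ℕ) (T : ℝ) :
    (fun s : ℝ => powExpPrimitive (s * ζ) n T) =O[atTop]
      fun s => s⁻¹ * Real.exp (s * (ζ.re * T)) := by
  have hinv : (fun s : ℝ => ((s : ℂ) * ζ)⁻¹) =O[atTop] fun s => s⁻¹ :=
    IsBigO.of_bound ‖ζ‖⁻¹ (Eventually.of_forall fun s => by simp [mul_comm])
  have hexp : (fun s : ℝ => exp (s * ζ * T)) =O[atTop] fun s => Real.exp (s * (ζ.re * T)) :=
    isBigO_of_le _ fun s => by simp [Complex.norm_exp, mul_assoc]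
  have hdecay : (fun s : ℝ => s⁻¹ * Real.exp (s * (ζ.re * T))) =O[atTop]
      fun s => Real.exp (s * (ζ.re * T)) := by
    simpa using (tendsto_inv_atTop_zero.isBigO_one ℝ).mul
      (isBigO_refl (fun s => Real.exp (s * (ζ.re * T))) atTop)
  induction n with
  | zero => simpa [powExpPrimitive, div_eq_inv_mul] using hinv.mul hexp
  | succ n ih =>
    have hbracket : (fun s : ℝ => (T : ℂ) ^ (n + 1) * exp (s * ζ * T)
        - (n + 1) * powExpPrimitive (s * ζ) n T) =O[atTop]
          fun s => Real.exp (s * (ζ.re * T)) :=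
      (hexp.const_mul_left _).sub ((ih.trans hdecay).const_mul_left _)
    simpa [powExpPrimitive, div_eq_inv_mul] using hinv.mul hbracket

end powExpPrimitive

theorem integral_sqrt_pow_mul_cexp_mul_sqrt {z : ℂ} (hz : z ≠ 0) (m : ℕ) {h : ℝ} (hh : 0 ≤ h) :
    ∫ r in (0 : ℝ)..h, ((√r ^ m : ℝ) : ℂ) * exp (z * √r)
      = 2 * (powExpPrimitive z (m + 1) √h - powExpPrimitive z (m + 1) 0) := by
  have hP := powExpPrimitive.hasDerivAt hz (m + 1)
  have hcont : Continuous fun r => 2 * powExpPrimitive z (m + 1) √r :=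
    continuous_const.mul <| (continuous_iff_continuousAt.2 fun u => (hP u).continuousAt).comp
      continuous_sqrt
  have hderiv : ∀ r ∈ Set.Ioo 0 h, HasDerivAt (fun r => 2 * powExpPrimitive z (m + 1) √r)
      (((√r ^ m : ℝ) : ℂ) * exp (z * √r)) r := by
    intro r hr
    have hsqrt : (√r : ℂ) ≠ 0 := ofReal_ne_zero.2 (sqrt_pos.2 hr.1).ne'
    refine (((hP √r).scomp r (hasDerivAt_sqrt hr.1.ne')).const_mul 2).congr_deriv ?_
    rw [Complex.real_smul]
    push_cast
    field_simp
    ring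
  rw [intervalIntegral.integral_eq_sub_of_hasDeriv_right_of_le hh hcont.continuousOn
    (fun r hr => (hderiv r hr).hasDerivWithinAt) (Continuous.intervalIntegrable (by fun_prop) _ _),
    Real.sqrt_zero, mul_sub]

lemma isBigO_inv_mul_exp_mul_sqrt {b : ℝ} (hb : b ≤ 0) :
    (fun s : ℝ => s⁻¹ * Real.exp (s * b)) =O[atTop]
      fun s => s ^ (-(1 : ℝ) / 2) * Real.exp (√s * b) := by
  refine IsBigO.of_bound 1 ?_
  filter_upwards [eventually_ge_atTop 1] with s hs
  have hs0 : 0 < s := one_pos.trans_le hs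
  have hinv : s⁻¹ ≤ s ^ (-(1 : ℝ) / 2) := by
    rw [← rpow_neg_one]
    exact rpow_le_rpow_of_exponent_le hs (by norm_num)
  have hsqrt : √s ≤ s := by
    nlinarith [sq_sqrt hs0.le, sqrt_nonneg s, one_le_sqrt.2 hs]
  rw [one_mul, norm_of_nonneg (by positivity), norm_of_nonneg (by positivity)]
  exact mul_le_mul hinv (exp_le_exp.2 (mul_le_mul_of_nonpos_right hsqrt hb)) (by positivity)
    (by positivity)

lemma tendsto_pow_mul_inv_mul_exp_atTop_nhds_zero {b : ℝ} (hb : b < 0) (k : ℕ) :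
    Tendsto (fun s : ℝ => s ^ k * (s⁻¹ * Real.exp (s * b))) atTop (𝓝 0) := by
  refine (tendsto_rpow_mul_exp_neg_mul_atTop_nhds_zero (k - 1) (-b) (neg_pos.2 hb)).congr' ?_
  filter_upwards [eventually_gt_atTop 0] with s hs
  rw [rpow_sub_one hs.ne', rpow_natCast, neg_neg, mul_comm b]
  ring

lemma tendsto_ofReal_pow_mul_of_isBigO {f : ℝ → ℂ} {g : ℝ → ℝ} {a : ℂ} {k : ℕ}
    (hf : (fun s : ℝ => f s - a / (s : ℂ) ^ k) =O[atTop] g)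
    (hg : Tendsto (fun s => s ^ k * g s) atTop (𝓝 0)) :
    Tendsto (fun s : ℝ => (s : ℂ) ^ k * f s) atTop (𝓝 a) := by
  have hpow : (fun s : ℝ => (s : ℂ) ^ k) =O[atTop] fun s => s ^ k :=
    isBigO_of_le _ fun s => by simp
  have hrem := ((hpow.mul hf).trans_tendsto hg).add_const a
  rw [zero_add] at hrem
  refine hrem.congr' ?_
  filter_upwards [eventually_ne_atTop 0] with s hs
  have : (s : ℂ) ^ k ≠ 0 := pow_ne_zero _ (ofReal_ne_zero.2 hs)
  field_simp
  ring

theorem stmt_12 (ζ : ℂ) (hζ : ζ.re < 0) (h : ℝ) (hh : 0 < h) (m : ℕ) :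
    (fun s : ℝ =>
        (∫ r in (0:ℝ)..h,
            ((r ^ ((m : ℝ) / 2) : ℝ) : ℂ) * Complex.exp (s * Real.sqrt r * ζ)) -
          2 * (-1 : ℂ) ^ m * (Nat.factorial (m + 1) : ℂ) /
            ((s : ℂ) ^ (m + 2) * ζ ^ (m + 2)))
      =O[atTop] (fun s : ℝ => s ^ (-(1 : ℝ) / 2) * Real.exp (Real.sqrt (s * h) * ζ.re)) ∧
    Tendsto
      (fun s : ℝ =>
        (s : ℂ) ^ (m + 2) *
          ∫ r in (0:ℝ)..h,
            ((r ^ ((m : ℝ) / 2) : ℝ) : ℂ) * Complex.exp (s * Real.sqrt r * ζ))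
      atTop
      (nhds (2 * (-1 : ℂ) ^ m * (Nat.factorial (m + 1) : ℂ) / ζ ^ (m + 2))) := by
  have hζ0 : ζ ≠ 0 := by rintro rfl; simp at hζ
  have hb : ζ.re * √h < 0 := mul_neg_of_neg_of_pos hζ (sqrt_pos.2 hh)
  have hrem : ∀ᶠ s : ℝ in atTop, 2 * powExpPrimitive (s * ζ) (m + 1) √h =
      (∫ r in (0:ℝ)..h, ((r ^ ((m : ℝ) / 2) : ℝ) : ℂ) * exp (s * √r * ζ)) -
        2 * (-1 : ℂ) ^ m * (m + 1).factorial / ((s : ℂ) ^ (m + 2) * ζ ^ (m + 2)) := by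
    filter_upwards [eventually_ne_atTop 0] with s hs
    have hz : (s : ℂ) * ζ ≠ 0 := mul_ne_zero (ofReal_ne_zero.2 hs) hζ0
    rw [intervalIntegral.integral_congr (g := fun r => ((√r ^ m : ℝ) : ℂ) * exp (s * ζ * √r))
      fun r hr => by
        rw [Set.uIcc_of_le hh.le] at hr
        simp only [rpow_div_two_eq_sqrt _ hr.1, rpow_natCast, mul_right_comm]]
    rw [integral_sqrt_pow_mul_cexp_mul_sqrt hz m hh.le, powExpPrimitive.apply_zero hz]
    ring
  have hR := ((powExpPrimitive.isBigO_atTop ζ (m + 1) √h).const_mul_left 2).congr' hrem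
    EventuallyEq.rfl
  refine ⟨hR.trans ((isBigO_inv_mul_exp_mul_sqrt hb.le).congr_right fun s => ?_), ?_⟩
  · rw [sqrt_mul' s hh.le]
    ring_nf
  · refine tendsto_ofReal_pow_mul_of_isBigO (hR.congr_left fun s => ?_)
      (tendsto_pow_mul_inv_mul_exp_atTop_nhds_zero hb _)
    rw [mul_comm ((s : ℂ) ^ _), ← div_div]
end

section
/- Let φ_m < φ_M be angles in (−π, π), let s > 0, and define v₁(x) = exp(−s·√r·e^{iφ/2}) in polar coordinates x = r(cos φ, sin φ). Then ∫_{K} v₁(x) dx = 6i·(e^{−2iφ_M} − e^{−2iφ_m})·s^{−4}, where K = {x ∈ ℝ² \ {0} : φ_m < arg(x₁ + i x₂) < φ_M}. -/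
/-!
The substitution `r = t²` turns the radial integral into a Laplace transform,
`∫₀^∞ e^{-c√r} r dr = 2 ∫₀^∞ t³ e^{-ct} dt = 12 / c⁴`, valid for `Re c > 0`. With
`c = s e^{iφ/2}` this holds because `|φ| < π`, so the inner integral is `12 s⁻⁴ e^{-2iφ}`,
and integrating this exponential over `[φ_m, φ_M]` gives the result.
-/

open Complex Real MeasureTheory Set Filter Topology

section LaplaceTransformOfPow

variable {c : ℂ}

lemma tendsto_pow_mul_cexp_neg_mul_atTop (hc : 0 < c.re) (n : ℕ) :
    Tendsto (fun t : ℝ => (t : ℂ) ^ n * cexp (-c * t)) atTop (𝓝 0) := by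
  rw [tendsto_zero_iff_norm_tendsto_zero]
  refine (tendsto_rpow_mul_exp_neg_mul_atTop_nhds_zero n c.re hc).congr' ?_
  filter_upwards [eventually_ge_atTop 0] with t ht
  simp [Complex.norm_exp, abs_of_nonneg ht]

lemma integrableOn_pow_mul_cexp_neg_mul_Ioi (hc : 0 < c.re) (n : ℕ) :
    IntegrableOn (fun t : ℝ => (t : ℂ) ^ n * cexp (-c * t)) (Ioi 0) := by
  refine (integrableOn_rpow_mul_exp_neg_mul_rpow (p := 1) (s := n)
    (neg_one_lt_zero.trans_le n.cast_nonneg) one_pos hc).mono' (by fun_prop) ?_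
  filter_upwards [self_mem_ae_restrict measurableSet_Ioi] with t ht
  simp [Complex.norm_exp, abs_of_pos (mem_Ioi.mp ht)]

lemma integral_pow_succ_mul_cexp_neg_mul_Ioi (hc : 0 < c.re) (n : ℕ) :
    ∫ t in Ioi (0 : ℝ), (t : ℂ) ^ (n + 1) * cexp (-c * t)
      = (n + 1) / c * ∫ t in Ioi (0 : ℝ), (t : ℂ) ^ n * cexp (-c * t) := by
  have hc0 : c ≠ 0 := fun h => by simp [h] at hc
  have hu : ∀ t ∈ Ioi (0 : ℝ), HasDerivAt (fun t : ℝ => (t : ℂ) ^ (n + 1))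
      ((n + 1) * (t : ℂ) ^ n) t := fun t _ => by
    simpa using (hasDerivAt_pow (n + 1) (t : ℂ)).comp_ofReal
  have hv : ∀ t ∈ Ioi (0 : ℝ), HasDerivAt (fun t : ℝ => -cexp (-c * t) / c)
      (cexp (-c * t)) t := fun t _ => by
    have := (((hasDerivAt_id (t : ℂ)).const_mul (-c)).cexp.neg.div_const c).comp_ofReal
    simp only [Pi.neg_apply, id] at this
    convert this using 1
    field_simp
  rw [integral_Ioi_mul_deriv_eq_deriv_mul hu hv (a' := 0) (b' := 0)]
  · rw [sub_zero, zero_sub, ← integral_neg, ← integral_const_mul]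
    refine setIntegral_congr_fun measurableSet_Ioi fun t _ => ?_
    field_simp
  · exact integrableOn_pow_mul_cexp_neg_mul_Ioi hc (n + 1)
  · refine IntegrableOn.congr_fun
      ((integrableOn_pow_mul_cexp_neg_mul_Ioi hc n).const_mul ((n + 1) / c)).neg
      (fun t _ => by simp only [Pi.neg_apply, Pi.mul_apply]; field_simp) measurableSet_Ioi
  · have : Continuous (fun t : ℝ => (t : ℂ) ^ (n + 1) * (-cexp (-c * t) / c)) := by fun_prop
    simpa [Pi.mul_def] using this.continuousWithinAt.tendsto (x := 0) (s := Ioi 0)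
  · simpa [Pi.mul_def, mul_div_assoc', neg_div] using
      ((tendsto_pow_mul_cexp_neg_mul_atTop hc (n + 1)).div_const c).neg

lemma integral_pow_mul_cexp_neg_mul_Ioi (hc : 0 < c.re) (n : ℕ) :
    ∫ t in Ioi (0 : ℝ), (t : ℂ) ^ n * cexp (-c * t) = n.factorial / c ^ (n + 1) := by
  have hc0 : c ≠ 0 := fun h => by simp [h] at hc
  induction n with
  | zero =>
    simpa [neg_div_neg_eq] using integral_exp_mul_complex_Ioi (a := -c) (by simpa using hc) 0
  | succ n ih =>
    rw [integral_pow_succ_mul_cexp_neg_mul_Ioi hc, ih]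
    push_cast [Nat.factorial_succ]
    field_simp
    ring

end LaplaceTransformOfPow

lemma integral_comp_sqrt_Ioi {E : Type*} [NormedAddCommGroup E] [NormedSpace ℝ E] (g : ℝ → E) :
    ∫ x in Ioi (0 : ℝ), g (√x) = ∫ t in Ioi (0 : ℝ), (2 * t) • g t := by
  rw [← integral_comp_rpow_Ioi_of_pos (p := 2) two_pos]
  refine setIntegral_congr_fun measurableSet_Ioi fun t ht => ?_
  rw [rpow_two, sqrt_sq (le_of_lt ht)]
  norm_num

lemma integral_cexp_neg_mul_sqrt_mul_Ioi {c : ℂ} (hc : 0 < c.re) :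
    ∫ r in Ioi (0 : ℝ), cexp (-c * √r) * r = 12 / c ^ 4 := by
  calc ∫ r in Ioi (0 : ℝ), cexp (-c * √r) * r
      = ∫ r in Ioi (0 : ℝ), (fun t : ℝ => cexp (-c * t) * (t : ℂ) ^ 2) (√r) :=
        setIntegral_congr_fun measurableSet_Ioi fun r hr => by
          simp [← ofReal_pow, sq_sqrt (le_of_lt hr)]
    _ = ∫ t in Ioi (0 : ℝ), 2 * ((t : ℂ) ^ 3 * cexp (-c * t)) := by
        rw [integral_comp_sqrt_Ioi (fun t : ℝ => cexp (-c * t) * (t : ℂ) ^ 2)]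
        refine setIntegral_congr_fun measurableSet_Ioi fun t _ => ?_
        simp only [real_smul]
        push_cast
        ring
    _ = 12 / c ^ 4 := by
        rw [integral_const_mul, integral_pow_mul_cexp_neg_mul_Ioi hc]
        norm_num [Nat.factorial]
        ring

lemma re_cexp_I_mul_div_two_pos {φ : ℝ} (hφ : φ ∈ Ioo (-π) π) :
    0 < (cexp (I * φ / 2)).re := by
  rw [show I * φ / 2 = ((φ / 2 : ℝ) : ℂ) * I by push_cast; ring, exp_ofReal_mul_I_re]
  exact cos_pos_of_mem_Ioo ⟨by linarith [hφ.1], by linarith [hφ.2]⟩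

lemma integral_cexp_neg_sqrt_mul_cexp_half_angle_Ioi {s φ : ℝ} (hs : 0 < s)
    (hφ : φ ∈ Ioo (-π) π) :
    ∫ r in Ioi (0 : ℝ), cexp (-(s * √r) * cexp (I * φ / 2)) * (r : ℂ)
      = 12 / (s : ℂ) ^ 4 * cexp (-2 * I * φ) := by
  set c : ℂ := s * cexp (I * φ / 2)
  have hc : 0 < c.re := by
    rw [re_ofReal_mul]
    exact mul_pos hs (re_cexp_I_mul_div_two_pos hφ)
  have hc4 : c ^ 4 = s ^ 4 * cexp (-(-2 * I * φ)) := by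
    rw [mul_pow, ← Complex.exp_nat_mul]
    push_cast
    ring_nf
  have hs4 : (s : ℂ) ^ 4 ≠ 0 := pow_ne_zero _ (ofReal_ne_zero.mpr hs.ne')
  calc ∫ r in Ioi (0 : ℝ), cexp (-(s * √r) * cexp (I * φ / 2)) * (r : ℂ)
      = ∫ r in Ioi (0 : ℝ), cexp (-c * √r) * r := by
        congr! 4 with r
        ring
    _ = 12 / (s : ℂ) ^ 4 * cexp (-2 * I * φ) := by
        rw [integral_cexp_neg_mul_sqrt_mul_Ioi hc, hc4, Complex.exp_neg]
        field_simp

theorem stmt_14 (φm φM : ℝ) (hm : -Real.pi < φm) (hmM : φm < φM) (hM : φM < Real.pi)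
    (s : ℝ) (hs : 0 < s) :
    (∫ φ in φm..φM, ∫ r in Set.Ioi (0:ℝ),
        Complex.exp (-(s * Real.sqrt r) * Complex.exp (I * φ / 2)) * (r : ℂ))
      = 6 * I * (Complex.exp (-2 * I * φM) - Complex.exp (-2 * I * φm)) / (s : ℂ) ^ 4 := by
  have hinner : ∀ φ ∈ uIcc φm φM,
      ∫ r in Ioi (0 : ℝ), cexp (-(s * √r) * cexp (I * φ / 2)) * (r : ℂ)
        = 12 / (s : ℂ) ^ 4 * cexp (-2 * I * φ) := by
    intro φ hφ
    rw [uIcc_of_le hmM.le] at hφ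
    exact integral_cexp_neg_sqrt_mul_cexp_half_angle_Ioi hs
      ⟨hm.trans_le hφ.1, hφ.2.trans_lt hM⟩
  rw [intervalIntegral.integral_congr hinner, intervalIntegral.integral_const_mul,
    integral_exp_mul_complex (mul_ne_zero (by norm_num) I_ne_zero)]
  field_simp
  rw [I_sq]
  ring
end
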